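/- Let α > 0, h₀ > 0, a = h₀/(8(1+α)²), b₀ ∈ ℝ, and v ∈ ℝ². The function w₁(y) = b₀·(h₀/(4α(1+α)))·(v·y/|y|)·|y|^{2α+3}/(1 + a·|y|^{2α+2})² satisfies Δw₁ + |y|^{2α}·h₀·e^{U}·w₁ = -|y|^{2α}·h₀·e^{U}·(v·y/|y|)·(|y| - (2(1+α)/α)·|y|/(1+a|y|^{2α+2}))·w₀ on ℝ² \ {0}, where U(y) = -2·log(1+a|y|^{2α+2}) and w₀(y) = b₀·(1 - a|y|^{2α+2})/(1 + a|y|^{2α+2}); moreover w₁(0) = 0 and ∇w₁(0) = 0. -/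

import Mathlib

/-!
Write `s = ‖y‖²`. Then `w₁(y) = c ⟪v, y⟫ φ(s)` with `c = b₀ h₀ / (4α(1+α))` and
`φ(s) = s^(α+1) / (1 + a s^(α+1))²`. For any such function on an `n`-dimensional space,
`Δ (⟪v, y⟫ φ(‖y‖²)) = ⟪v, y⟫ (4 s φ''(s) + 2 (n + 2) φ'(s))`, so the PDE reduces to an ODE for `φ`
on `s > 0`, which is an algebraic identity once `φ'` and `φ''` are written out. Since `α + 1 > 1`,
`φ` is differentiable at `0` with `φ(0) = 0`, which gives `∇w₁(0) = 0`.
-/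

open Real

noncomputable def lap (f : EuclideanSpace ℝ (Fin 2) → ℝ) (x : EuclideanSpace ℝ (Fin 2)) : ℝ :=
  ∑ i : Fin 2, iteratedFDeriv ℝ 2 f x ![EuclideanSpace.single i 1, EuclideanSpace.single i 1]

open Filter Topology InnerProductSpace Laplacian
open scoped RealInnerProductSpace

theorem norm_rpow_two_mul {E : Type*} [SeminormedAddCommGroup E] (y : E) (q : ℝ) :
    ‖y‖ ^ (2 * q) = (‖y‖ ^ 2) ^ q := by
  rw [← rpow_natCast_mul (norm_nonneg y)]
  norm_num

theorem exp_neg_two_mul_log {p : ℝ} (hp : 0 < p) : exp (-2 * log p) = (p ^ 2)⁻¹ := by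
  rw [← exp_log (inv_pos.mpr (pow_pos hp 2)), log_inv, log_pow]
  push_cast
  ring_nf

section InnerMulRadial

variable {E : Type*} [NormedAddCommGroup E] [InnerProductSpace ℝ E] {f f' : ℝ → ℝ} {v y : E}

theorem hasFDerivAt_inner_mul_comp_norm_sq {d : ℝ} (hf : HasDerivAt f d (‖y‖ ^ 2)) :
    HasFDerivAt (fun z => ⟪v, z⟫ * f (‖z‖ ^ 2))
      (f (‖y‖ ^ 2) • innerSL ℝ v + (2 * ⟪v, y⟫ * d) • innerSL ℝ y) y := by
  refine ((innerSL ℝ v).hasFDerivAt.mul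
    (hf.comp_hasFDerivAt y (hasStrictFDerivAt_norm_sq y).hasFDerivAt)).congr_fderiv ?_
  ext e
  simp only [add_apply, smul_apply, innerSL_apply_apply, smul_eq_mul, nsmul_eq_mul,
    Function.comp_apply]
  ring

theorem fderiv_fderiv_inner_mul_comp_norm_sq_apply {f'' : ℝ}
    (hf : ∀ᶠ s in 𝓝 (‖y‖ ^ 2), HasDerivAt f (f' s) s) (hf' : HasDerivAt f' f'' (‖y‖ ^ 2))
    (e : E) :
    fderiv ℝ (fderiv ℝ fun z => ⟪v, z⟫ * f (‖z‖ ^ 2)) y e e =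
      4 * f' (‖y‖ ^ 2) * ⟪v, e⟫ * ⟪y, e⟫ + 4 * f'' * ⟪v, y⟫ * ⟪y, e⟫ ^ 2
        + 2 * f' (‖y‖ ^ 2) * ⟪v, y⟫ * ‖e‖ ^ 2 := by
  have hnorm : HasFDerivAt (fun z : E => ‖z‖ ^ 2) (2 • innerSL ℝ y) y :=
    (hasStrictFDerivAt_norm_sq y).hasFDerivAt
  have hfderiv : fderiv ℝ (fun z => ⟪v, z⟫ * f (‖z‖ ^ 2)) =ᶠ[𝓝 y]
      fun z => f (‖z‖ ^ 2) • innerSL ℝ v + (2 * ⟪v, z⟫ * f' (‖z‖ ^ 2)) • innerSL ℝ z :=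
    (((continuous_norm.pow 2).tendsto y).eventually hf).mono
      fun z hz => (hasFDerivAt_inner_mul_comp_norm_sq hz).fderiv
  have hsecond : HasFDerivAt
      (fun z => f (‖z‖ ^ 2) • innerSL ℝ v + (2 * ⟪v, z⟫ * f' (‖z‖ ^ 2)) • innerSL ℝ z) _ y :=
    ((hf.self_of_nhds.comp_hasFDerivAt y hnorm).smul_const (innerSL ℝ v)).add
      ((((innerSL ℝ v).hasFDerivAt.const_mul 2).mul (hf'.comp_hasFDerivAt y hnorm)).smul
        (innerSL ℝ (E := E)).hasFDerivAt)
  rw [hfderiv.fderiv_eq, hsecond.fderiv]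
  simp only [coe_innerSL_apply, Pi.mul_apply, Function.comp_apply, add_apply,
    ContinuousLinearMap.smulRight_apply, smul_apply, nsmul_eq_mul, Nat.cast_ofNat, smul_eq_mul]
  rw [innerSL_apply_apply, innerSL_apply_apply, real_inner_self_eq_norm_sq]
  ring

theorem laplacian_inner_mul_comp_norm_sq [FiniteDimensional ℝ E] {f'' : ℝ}
    (hf : ∀ᶠ s in 𝓝 (‖y‖ ^ 2), HasDerivAt f (f' s) s) (hf' : HasDerivAt f' f'' (‖y‖ ^ 2)) :
    Δ (fun z => ⟪v, z⟫ * f (‖z‖ ^ 2)) y =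
      ⟪v, y⟫ * (4 * ‖y‖ ^ 2 * f'' + 2 * (Module.finrank ℝ E + 2) * f' (‖y‖ ^ 2)) := by
  set b := stdOrthonormalBasis ℝ E
  have hsum : ∑ i, 4 * f' (‖y‖ ^ 2) * ⟪v, b i⟫ * ⟪y, b i⟫ = 4 * f' (‖y‖ ^ 2) * ⟪v, y⟫ := by
    rw [← b.sum_inner_mul_inner v y, Finset.mul_sum]
    exact Finset.sum_congr rfl fun i _ => by rw [real_inner_comm y]; ring
  rw [laplacian_eq_iteratedFDeriv_orthonormalBasis _ b]
  simp only [iteratedFDeriv_two_apply, Matrix.cons_val_zero, Matrix.cons_val_one,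
    fderiv_fderiv_inner_mul_comp_norm_sq_apply hf hf', b.orthonormal.1, Finset.sum_add_distrib]
  simp only [← Finset.mul_sum, hsum, b.sum_sq_inner_left, Finset.sum_const, Finset.card_univ,
    Fintype.card_fin, one_pow, nsmul_eq_mul, mul_one]
  ring

end InnerMulRadial

theorem lap_eq_laplacian (f : EuclideanSpace ℝ (Fin 2) → ℝ) : lap f = Δ f := by
  rw [laplacian_eq_iteratedFDeriv_orthonormalBasis f (EuclideanSpace.basisFun (Fin 2) ℝ)]
  ext x
  simp [lap]

section Profile

variable {α a s : ℝ}

noncomputable def profile (α a s : ℝ) : ℝ := s ^ (α + 1) / (1 + a * s ^ (α + 1)) ^ 2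

noncomputable def profileDeriv (α a s : ℝ) : ℝ :=
  (α + 1) * s ^ α * (1 - a * s ^ (α + 1)) / (1 + a * s ^ (α + 1)) ^ 3

noncomputable def profileDeriv2 (α a s : ℝ) : ℝ :=
  (α + 1) * s ^ (α - 1) * (α - 4 * (α + 1) * (a * s ^ (α + 1)) + (α + 2) * (a * s ^ (α + 1)) ^ 2)
    / (1 + a * s ^ (α + 1)) ^ 4

theorem one_add_mul_rpow_pos (ha : 0 ≤ a) (hs : 0 ≤ s) : 0 < 1 + a * s ^ (α + 1) := by
  have := rpow_nonneg hs (α + 1)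
  positivity

theorem hasDerivAt_profile (hα : 0 ≤ α) (ha : 0 ≤ a) (hs : 0 ≤ s) :
    HasDerivAt (profile α a) (profileDeriv α a s) s := by
  have hp := one_add_mul_rpow_pos (α := α) ha hs
  have ht : HasDerivAt (fun s : ℝ => s ^ (α + 1)) ((α + 1) * s ^ α) s := by
    simpa using hasDerivAt_rpow_const (x := s) (p := α + 1) (Or.inr (by linarith))
  refine (ht.div (((ht.const_mul a).const_add 1).pow 2) (pow_pos hp 2).ne').congr_deriv ?_
  unfold profileDeriv
  simp only [Pi.pow_apply]
  field_simp
  ring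

theorem hasDerivAt_profileDeriv (ha : 0 ≤ a) (hs : 0 < s) :
    HasDerivAt (profileDeriv α a) (profileDeriv2 α a s) s := by
  have hp := one_add_mul_rpow_pos (α := α) ha hs.le
  have ht : HasDerivAt (fun s : ℝ => s ^ (α + 1)) ((α + 1) * s ^ α) s := by
    simpa using hasDerivAt_rpow_const (x := s) (p := α + 1) (Or.inl hs.ne')
  have hnum := ((hasDerivAt_rpow_const (p := α) (Or.inl hs.ne')).const_mul (α + 1)).mul
    ((ht.const_mul a).const_sub 1)
  refine (hnum.div (((ht.const_mul a).const_add 1).pow 3) (pow_pos hp 3).ne').congr_deriv ?_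
  unfold profileDeriv2
  simp only [Pi.pow_apply, Pi.mul_apply]
  rw [rpow_add_one hs.ne'] at hp
  rw [rpow_sub_one hs.ne', rpow_add_one hs.ne']
  field_simp
  ring

theorem profile_ode (ha : 0 ≤ a) (hs : 0 < s) :
    4 * s * profileDeriv2 α a s + 8 * profileDeriv α a s
        + 8 * a * (1 + α) ^ 2 * s ^ α * profile α a s / (1 + a * s ^ (α + 1)) ^ 2
      = 4 * (1 + α) * s ^ α * (α + 2 - α * (a * s ^ (α + 1))) * (1 - a * s ^ (α + 1))
        / (1 + a * s ^ (α + 1)) ^ 4 := by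
  have hp := one_add_mul_rpow_pos (α := α) ha hs.le
  unfold profile profileDeriv profileDeriv2
  rw [rpow_add_one hs.ne'] at hp
  rw [rpow_sub_one hs.ne', rpow_add_one hs.ne']
  field_simp
  ring

theorem lap_inner_mul_profile (hα : 0 ≤ α) (ha : 0 ≤ a) (c : ℝ) {v y : EuclideanSpace ℝ (Fin 2)}
    (hy : y ≠ 0) :
    lap (fun z => ⟪v, z⟫ * (c * profile α a (‖z‖ ^ 2))) y =
      ⟪v, y⟫ * c * (4 * ‖y‖ ^ 2 * profileDeriv2 α a (‖y‖ ^ 2) + 8 * profileDeriv α a (‖y‖ ^ 2)) := by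
  have hs : 0 < ‖y‖ ^ 2 := by positivity
  have hf : ∀ᶠ t in 𝓝 (‖y‖ ^ 2),
      HasDerivAt (fun t => c * profile α a t) (c * profileDeriv α a t) t := by
    filter_upwards [Ioi_mem_nhds hs] with t ht
    exact (hasDerivAt_profile hα ha ht.le).const_mul c
  rw [lap_eq_laplacian, laplacian_inner_mul_comp_norm_sq hf
    ((hasDerivAt_profileDeriv ha hs).const_mul c), finrank_euclideanSpace_fin]
  ring

end Profile

theorem inner_mul_profile_norm_sq {E : Type*} [NormedAddCommGroup E] [InnerProductSpace ℝ E]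
    (v z : E) (α a b : ℝ) :
    ⟪v, z⟫ * (b * profile α a (‖z‖ ^ 2)) =
      b * (⟪v, z⟫ / ‖z‖) * ‖z‖ ^ (2 * α + 3) / (1 + a * ‖z‖ ^ (2 * α + 2)) ^ 2 := by
  rcases eq_or_ne z 0 with rfl | hz
  · simp
  rw [profile, ← norm_rpow_two_mul, show 2 * α + 3 = 2 * α + 2 + 1 by ring,
    rpow_add_one (norm_ne_zero_iff.mpr hz), show 2 * (α + 1) = 2 * α + 2 by ring]
  field_simp

theorem stmt10 (α h₀ b₀ : ℝ) (hα : 0 < α) (hh : 0 < h₀)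
    (a : ℝ) (ha : a = h₀ / (8 * (1 + α) ^ 2))
    (v : EuclideanSpace ℝ (Fin 2))
    (w₁ w₀ U : EuclideanSpace ℝ (Fin 2) → ℝ)
    (hw₁ : ∀ y, w₁ y = b₀ * (h₀ / (4 * α * (1 + α))) * ((inner ℝ v y : ℝ) / ‖y‖)
        * ‖y‖ ^ (2 * α + 3) / (1 + a * ‖y‖ ^ (2 * α + 2)) ^ 2)
    (hw₀ : ∀ y, w₀ y = b₀ * (1 - a * ‖y‖ ^ (2 * α + 2)) / (1 + a * ‖y‖ ^ (2 * α + 2)))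
    (hU : ∀ y, U y = -2 * Real.log (1 + a * ‖y‖ ^ (2 * α + 2))) :
    (∀ y : EuclideanSpace ℝ (Fin 2), y ≠ 0 →
      lap w₁ y + ‖y‖ ^ (2 * α) * h₀ * Real.exp (U y) * w₁ y
        = -(‖y‖ ^ (2 * α)) * h₀ * Real.exp (U y)
            * ((inner ℝ v y : ℝ) / ‖y‖)
            * (‖y‖ - (2 * (1 + α) / α) * ‖y‖ / (1 + a * ‖y‖ ^ (2 * α + 2)))
            * w₀ y) ∧
    w₁ 0 = 0 ∧ fderiv ℝ w₁ 0 = 0 := by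
  have ha₀ : 0 ≤ a := by rw [ha]; positivity
  have hh₀ : h₀ = 8 * a * (1 + α) ^ 2 := by rw [ha]; field_simp
  set c := b₀ * (h₀ / (4 * α * (1 + α)))
  have hw₁' : w₁ = fun z => ⟪v, z⟫ * (c * profile α a (‖z‖ ^ 2)) :=
    funext fun z => (hw₁ z).trans (inner_mul_profile_norm_sq v z α a c).symm
  refine ⟨fun y hy => ?_, by simp [hw₁'], ?_⟩
  · have hs : 0 < ‖y‖ ^ 2 := by positivity
    have hp : 0 < 1 + a * (‖y‖ ^ 2) ^ (α + 1) := one_add_mul_rpow_pos ha₀ hs.le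
    have hpow : ‖y‖ ^ (2 * α + 2) = (‖y‖ ^ 2) ^ (α + 1) := by rw [← norm_rpow_two_mul]; ring_nf
    have hr : ‖y‖ ≠ 0 := norm_ne_zero_iff.mpr hy
    rw [hw₁', lap_inner_mul_profile hα.le ha₀ c hy, hU, hw₀, hpow, norm_rpow_two_mul,
      exp_neg_two_mul_log hp]
    -- the equation is `⟪v, y⟫ * c` times the ODE satisfied by the profile
    linear_combination (norm := skip) (⟪v, y⟫ * c) * profile_ode (α := α) ha₀ hs
    simp only [c]
    rw [hh₀]
    field_simp
    ring
  · rw [hw₁', (hasFDerivAt_inner_mul_comp_norm_sq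
      ((hasDerivAt_profile hα.le ha₀ (by positivity)).const_mul c)).fderiv]
    simp [profile, zero_rpow (by positivity : α + 1 ≠ 0)]
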